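/- Let V and W be real vector spaces whose topologies are generated by increasing, point-separating sequences of seminorms (μ_n)_{n∈ℕ} and (ν_n)_{n∈ℕ} respectively, fix r, b ∈ ℕ, and let T_{r,b}L(V,W) be the space of continuous linear maps f : V → W with ‖f‖_n := sup{ν_n(f(v)) : μ_{n+r}(v) ≤ 1} < ∞ for all n ≥ b, equipped with the topology generated by the seminorms ‖·‖_n, n ≥ b. Then: (a) this topology on T_{r,b}L(V,W) is finer than the compact-open topology (the topology of uniform convergence on compact subsets of V); and (b) the evaluation map T_{r,b}L(V,W) × V → W, (A,v) ↦ A(v), is jointly continuous. -/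

import Mathlib

/-- The set of values `ν n (f v)` for `v` in the unit ball of the seminorm `μ (n+r)`;
its supremum is the operator "norm" `‖f‖_n` of a tame linear map. -/
def tameNormSet {V W : Type*} [AddCommGroup V] [Module ℝ V] [TopologicalSpace V]
    [AddCommGroup W] [Module ℝ W] [TopologicalSpace W]
    (μ : SeminormFamily ℝ V ℕ) (ν : SeminormFamily ℝ W ℕ) (r : ℕ)
    (f : V →L[ℝ] W) (n : ℕ) : Set ℝ :=
  (fun v => ν n (f v)) '' {v : V | μ (n + r) v ≤ 1}

/-- `‖f‖_n = sup {ν n (f v) | μ (n+r) v ≤ 1}`. -/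
noncomputable def tameOpNorm {V W : Type*} [AddCommGroup V] [Module ℝ V]
    [TopologicalSpace V] [AddCommGroup W] [Module ℝ W] [TopologicalSpace W]
    (μ : SeminormFamily ℝ V ℕ) (ν : SeminormFamily ℝ W ℕ) (r : ℕ)
    (f : V →L[ℝ] W) (n : ℕ) : ℝ :=
  sSup (tameNormSet μ ν r f n)

/-- `T_{r,b}L(V,W)`: the continuous linear maps `f : V → W` with `‖f‖_n < ∞`
(i.e. the relevant set of values is bounded above) for all `n ≥ b`. -/
def TameLinearMaps {V W : Type*} [AddCommGroup V] [Module ℝ V] [TopologicalSpace V]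
    [AddCommGroup W] [Module ℝ W] [TopologicalSpace W]
    (μ : SeminormFamily ℝ V ℕ) (ν : SeminormFamily ℝ W ℕ) (r b : ℕ) : Type _ :=
  {f : V →L[ℝ] W // ∀ n, b ≤ n → BddAbove (tameNormSet μ ν r f n)}

/-! A tame map `A` satisfies `ν n (A v) ≤ ‖A‖_n μ (n + r) v`, so near `(A₀, v₀)`
`ν n (A v - A₀ v₀) ≤ ‖A - A₀‖_n μ (n + r) v + ν n (A₀ v - A₀ v₀)`, where the first term is small
because `‖A - A₀‖_n` is small and `μ (n + r) v` stays bounded, and the second by continuity of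
`A₀`. This gives (b), and (a) follows from (b) for any space of maps: currying the continuous
evaluation map gives a continuous map into the compact-open topology. -/

open Filter Topology

theorem isOpen_setOf_forall_mem_of_continuous_uncurry {X Y Z : Type*} [TopologicalSpace X]
    [TopologicalSpace Y] [TopologicalSpace Z] {F : X → Y → Z}
    (hF : Continuous (Function.uncurry F)) {K : Set Y} (hK : IsCompact K) {O : Set Z}
    (hO : IsOpen O) : IsOpen {x | ∀ y ∈ K, F x y ∈ O} :=
  (ContinuousMap.isOpen_setOfPred_mapsTo hK hO).preimage
    (ContinuousMap.curry ⟨_, hF⟩).continuous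

section TameLinearMaps

variable {V W : Type*} [AddCommGroup V] [Module ℝ V] [TopologicalSpace V]
    [AddCommGroup W] [Module ℝ W] [TopologicalSpace W]
    (μ : SeminormFamily ℝ V ℕ) (ν : SeminormFamily ℝ W ℕ) (r : ℕ)

theorem tameOpNorm_nonneg (f : V →L[ℝ] W) (n : ℕ) : 0 ≤ tameOpNorm μ ν r f n :=
  Real.sSup_nonneg <| by rintro _ ⟨v, -, rfl⟩; exact apply_nonneg _ _

theorem tameOpNorm_zero (n : ℕ) : tameOpNorm μ ν r (0 : V →L[ℝ] W) n = 0 :=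
  le_antisymm (Real.sSup_nonpos <| by rintro _ ⟨v, -, rfl⟩; simp)
    (tameOpNorm_nonneg μ ν r 0 n)

theorem seminorm_apply_le_tameOpNorm {f : V →L[ℝ] W} {n : ℕ}
    (hf : BddAbove (tameNormSet μ ν r f n)) {v : V} (hv : μ (n + r) v ≤ 1) :
    ν n (f v) ≤ tameOpNorm μ ν r f n :=
  le_csSup hf ⟨v, hv, rfl⟩

theorem seminorm_apply_le_tameOpNorm_mul {f : V →L[ℝ] W} {n : ℕ}
    (hf : BddAbove (tameNormSet μ ν r f n)) (v : V) :
    ν n (f v) ≤ tameOpNorm μ ν r f n * μ (n + r) v := by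
  have hscaled : ∀ s ∈ Set.Ioi (μ (n + r) v), ν n (f v) ≤ tameOpNorm μ ν r f n * s := by
    intro s hs
    have hs0 : 0 < s := (apply_nonneg _ v).trans_lt hs
    have hball : μ (n + r) (s⁻¹ • v) ≤ 1 := by
      rw [map_smul_eq_mul, norm_inv, Real.norm_of_nonneg hs0.le, inv_mul_le_iff₀ hs0, mul_one]
      exact le_of_lt hs
    have h := seminorm_apply_le_tameOpNorm μ ν r hf hball
    rwa [map_smul, map_smul_eq_mul, norm_inv, Real.norm_of_nonneg hs0.le, inv_mul_le_iff₀ hs0,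
      mul_comm] at h
  have hlim : Tendsto (fun s => tameOpNorm μ ν r f n * s) (𝓝[>] (μ (n + r) v))
      (𝓝 (tameOpNorm μ ν r f n * μ (n + r) v)) :=
    ((continuous_const_mul _).tendsto _).mono_left nhdsWithin_le_nhds
  exact ge_of_tendsto hlim (eventually_nhdsWithin_of_forall hscaled)

variable [IsTopologicalAddGroup W]

theorem bddAbove_tameNormSet_sub {f g : V →L[ℝ] W} {n : ℕ}
    (hf : BddAbove (tameNormSet μ ν r f n)) (hg : BddAbove (tameNormSet μ ν r g n)) :
    BddAbove (tameNormSet μ ν r (f - g) n) := by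
  refine ⟨tameOpNorm μ ν r f n + tameOpNorm μ ν r g n, ?_⟩
  rintro _ ⟨v, hv, rfl⟩
  calc ν n (f v - g v) ≤ ν n (f v) + ν n (g v) := map_sub_le_add _ _ _
    _ ≤ _ := add_le_add (seminorm_apply_le_tameOpNorm μ ν r hf hv)
        (seminorm_apply_le_tameOpNorm μ ν r hg hv)

variable {μ ν r} {b : ℕ}

instance TameLinearMaps.topologicalSpace : TopologicalSpace (TameLinearMaps μ ν r b) :=
  TopologicalSpace.generateFrom
    {U : Set (TameLinearMaps μ ν r b) | ∃ g : TameLinearMaps μ ν r b,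
      ∃ n, b ≤ n ∧ ∃ δ : ℝ, 0 < δ ∧
        U = {f : TameLinearMaps μ ν r b | tameOpNorm μ ν r (f.1 - g.1) n < δ}}

theorem TameLinearMaps.tendsto_tameOpNorm_sub (A₀ : TameLinearMaps μ ν r b) {n : ℕ}
    (hn : b ≤ n) : Tendsto (fun A : TameLinearMaps μ ν r b => tameOpNorm μ ν r (A.1 - A₀.1) n)
      (𝓝 A₀) (𝓝 0) := by
  refine tendsto_order.2 ⟨fun a ha => .of_forall fun A => ha.trans_le
    (tameOpNorm_nonneg μ ν r _ n), fun δ hδ => ?_⟩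
  refine IsOpen.mem_nhds (TopologicalSpace.GenerateOpen.basic _ ⟨A₀, n, hn, δ, hδ, rfl⟩) ?_
  simpa only [Set.mem_ofPred_eq, sub_self, tameOpNorm_zero] using hδ

theorem TameLinearMaps.continuous_eval (hμ : WithSeminorms μ) (hν : WithSeminorms ν)
    (hνmono : ∀ (n : ℕ) (w : W), ν n w ≤ ν (n + 1) w) :
    Continuous fun p : TameLinearMaps μ ν r b × V => p.1.1 p.2 := by
  refine continuous_iff_continuousAt.2 fun ⟨A₀, v₀⟩ => (hν.tendsto_nhds _ _).2 fun i ε hε => ?_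
  set m := max i b
  have hbound : ∀ p : TameLinearMaps μ ν r b × V, ν m (p.1.1 p.2 - A₀.1 v₀) ≤
      tameOpNorm μ ν r (p.1.1 - A₀.1) m * μ (m + r) p.2 + ν m (A₀.1 p.2 - A₀.1 v₀) := by
    rintro ⟨A, v⟩
    calc ν m (A.1 v - A₀.1 v₀) ≤ ν m ((A.1 - A₀.1) v) + ν m (A₀.1 v - A₀.1 v₀) := by
          simpa only [sub_apply, sub_add_sub_cancel]
            using map_add_le_add (ν m) ((A.1 - A₀.1) v) (A₀.1 v - A₀.1 v₀)
      _ ≤ _ := by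
          gcongr
          exact seminorm_apply_le_tameOpNorm_mul μ ν r
            (bddAbove_tameNormSet_sub μ ν r (A.2 m (le_max_right i b))
              (A₀.2 m (le_max_right i b))) v
  have hlim : Tendsto (fun p : TameLinearMaps μ ν r b × V =>
      tameOpNorm μ ν r (p.1.1 - A₀.1) m * μ (m + r) p.2 + ν m (A₀.1 p.2 - A₀.1 v₀))
      (𝓝 (A₀, v₀)) (𝓝 0) := by
    have hA := (TameLinearMaps.tendsto_tameOpNorm_sub A₀ (le_max_right i b)).comp
      (continuous_fst.tendsto (A₀, v₀))
    have hv := ((hμ.continuous_seminorm (m + r)).comp continuous_snd).tendsto (A₀, v₀)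
    have hw : Continuous fun v => ν m (A₀.1 v - A₀.1 v₀) :=
      (hν.continuous_seminorm m).comp (A₀.1.continuous.sub continuous_const)
    simpa using (hA.mul hv).add ((hw.comp continuous_snd).tendsto (A₀, v₀))
  have hsmall := squeeze_zero (fun _ => apply_nonneg _ _) hbound hlim
  filter_upwards [hsmall.eventually (gt_mem_nhds hε)] with p hp
  have hmono : Monotone ν := monotone_nat_of_le_succ fun n w => hνmono n w
  exact (hmono (le_max_left i b) _).trans_lt hp

end TameLinearMaps

theorem stmt15_general (V W : Type*)
    [AddCommGroup V] [Module ℝ V] [TopologicalSpace V]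
    [AddCommGroup W] [Module ℝ W] [TopologicalSpace W] [IsTopologicalAddGroup W]
    (μ : SeminormFamily ℝ V ℕ) (ν : SeminormFamily ℝ W ℕ)
    (hμtop : WithSeminorms μ) (hνtop : WithSeminorms ν)
    (hνmono : ∀ (n : ℕ) (w : W), ν n w ≤ ν (n + 1) w)
    (r b : ℕ)
    (t : TopologicalSpace (TameLinearMaps μ ν r b))
    (ht : t = TopologicalSpace.generateFrom
      {U : Set (TameLinearMaps μ ν r b) | ∃ g : TameLinearMaps μ ν r b,
        ∃ n, b ≤ n ∧ ∃ δ : ℝ, 0 < δ ∧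
          U = {f : TameLinearMaps μ ν r b | tameOpNorm μ ν r (f.1 - g.1) n < δ}}) :
    t ≤ TopologicalSpace.generateFrom
      {U : Set (TameLinearMaps μ ν r b) | ∃ K : Set V, IsCompact K ∧
        ∃ O : Set W, IsOpen O ∧
          U = {f : TameLinearMaps μ ν r b | ∀ v ∈ K, f.1 v ∈ O}} ∧
    @Continuous (TameLinearMaps μ ν r b × V) W
      (@instTopologicalSpaceProd (TameLinearMaps μ ν r b) V t _) _
      (fun p => p.1.1 p.2) := by
  have heval : @Continuous (TameLinearMaps μ ν r b × V) W
      (@instTopologicalSpaceProd (TameLinearMaps μ ν r b) V t _) _ (fun p => p.1.1 p.2) := by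
    subst ht
    exact TameLinearMaps.continuous_eval hμtop hνtop hνmono
  refine ⟨TopologicalSpace.le_generateFrom_iff_subset_isOpen.2 ?_, heval⟩
  rintro _ ⟨K, hK, O, hO, rfl⟩
  exact isOpen_setOf_forall_mem_of_continuous_uncurry heval hK hO

/-- Let `V`, `W` be real vector spaces whose topologies are generated by increasing,
point-separating sequences of seminorms `(μ n)`, `(ν n)`, and fix `r b : ℕ`.  Equip
`T_{r,b}L(V,W)` with the topology generated by the seminorms `‖·‖_n`, `n ≥ b` (i.e.
generated by all balls `{f | ‖f - g‖_n < δ}`).  Then (a) this topology is finer than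
the compact-open topology, and (b) the evaluation map `(A, v) ↦ A v` is jointly
continuous on `T_{r,b}L(V,W) × V`. -/
theorem stmt15 (V W : Type*)
    [AddCommGroup V] [Module ℝ V] [TopologicalSpace V]
    [AddCommGroup W] [Module ℝ W] [TopologicalSpace W] [IsTopologicalAddGroup W]
    (μ : SeminormFamily ℝ V ℕ) (ν : SeminormFamily ℝ W ℕ)
    (hμtop : WithSeminorms μ) (hνtop : WithSeminorms ν)
    (hμmono : ∀ (n : ℕ) (v : V), μ n v ≤ μ (n + 1) v)
    (hνmono : ∀ (n : ℕ) (w : W), ν n w ≤ ν (n + 1) w)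
    (hμsep : ∀ v : V, (∀ n, μ n v = 0) → v = 0)
    (hνsep : ∀ w : W, (∀ n, ν n w = 0) → w = 0)
    (r b : ℕ)
    (t : TopologicalSpace (TameLinearMaps μ ν r b))
    (ht : t = TopologicalSpace.generateFrom
      {U : Set (TameLinearMaps μ ν r b) | ∃ g : TameLinearMaps μ ν r b,
        ∃ n, b ≤ n ∧ ∃ δ : ℝ, 0 < δ ∧
          U = {f : TameLinearMaps μ ν r b | tameOpNorm μ ν r (f.1 - g.1) n < δ}}) :
    t ≤ TopologicalSpace.generateFrom
      {U : Set (TameLinearMaps μ ν r b) | ∃ K : Set V, IsCompact K ∧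
        ∃ O : Set W, IsOpen O ∧
          U = {f : TameLinearMaps μ ν r b | ∀ v ∈ K, f.1 v ∈ O}} ∧
    @Continuous (TameLinearMaps μ ν r b × V) W
      (@instTopologicalSpaceProd (TameLinearMaps μ ν r b) V t _) _
      (fun p => p.1.1 p.2) :=
  stmt15_general V W μ ν hμtop hνtop hνmono r b t ht
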